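/- arXiv:2309.04874 — 2 statements merged into one kernel-verified Lean document; each statement's English description precedes it below -/
import Mathlib

section
/- Let H be a separable real Hilbert space, let 1 < p ≤ 2 and let q satisfy 1/p + 1/q = 1. If B belongs to the class K^p_{1/2}(H), then for every δ ∈ (0, 1/2] there exists a constant C_δ > 0 such that the function C_δ·B belongs to the class K^p_δ(H). -/
open MeasureTheory ENNReal Set

noncomputable section

variable {H : Type*} [NormedAddCommGroup H] [InnerProductSpace ℝ H] [CompleteSpace H]
  [SecondCountableTopology H]

/-- The domain `Ω_p = {x ∈ H × [0,∞)³ : ‖x₁‖^p ≤ x₃, x₂^q ≤ x₄²}`. -/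
def OmegaP (p q : ℝ) : Set (H × ℝ × ℝ × ℝ) :=
  {x | 0 ≤ x.2.1 ∧ 0 ≤ x.2.2.1 ∧ 0 ≤ x.2.2.2 ∧
    ‖x.1‖ ^ p ≤ x.2.2.1 ∧ x.2.1 ^ q ≤ x.2.2.2 ^ (2 : ℕ)}

/-- Condition (B2): the geometric concave-type condition with parameter `δ`. -/
def CondB2 (p q δ : ℝ) (B : H × ℝ × ℝ × ℝ → ℝ) : Prop :=
  ∀ (N : ℕ) (x : H × ℝ × ℝ × ℝ) (y : Fin N → H × ℝ × ℝ × ℝ) (d : ℝ) (lam : Fin N → ℝ),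
    x ∈ OmegaP p q → (∀ k, y k ∈ OmegaP p q) → (∀ k, δ ≤ lam k) →
    (∑ k, lam k) = 1 →
    (∑ k, lam k • y k) - x = ((0 : H), d ^ (2 : ℕ), (0 : ℝ), (0 : ℝ)) →
    |d| * Metric.diam (Set.range fun k => (y k).1) + ∑ k, lam k * B (y k) ≤ B x

/-- The class `K^p_δ(H)`: continuity on `Ω_p`, the boundary condition (B1) and
the concave-type condition (B2). -/
def MemK (p q δ : ℝ) (B : H × ℝ × ℝ × ℝ → ℝ) : Prop :=
  ContinuousOn B (OmegaP p q) ∧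
  (∀ x ∈ OmegaP (H := H) p q, ‖x.1‖ ^ p = x.2.2.1 → 0 ≤ B x) ∧
  CondB2 p q δ B

/-!
Taking `d = 0` and two points of weight `1/2` in (B2) shows that `B` is midpoint concave on
`Ω_p`, which is convex because `q ≥ 2`; by continuity `B` is concave there.

Now let `z = ∑ λₖ yᵏ` with all `λₖ ≥ δ`, and fix `k`. With `s = min λₖ (1/2)` write
`z = s yᵏ + (1 - s) b`, where `b ∈ Ω_p` is the barycentre of the remaining mass. Then `z` is the
midpoint of `b` and `2s yᵏ + (1 - 2s) b`, so (B2) for `δ = 1/2` together with Jensen's inequality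
for `b` gives `2δ|d|‖yᵏ₁ - z₁‖ + ∑ λᵢ B(yⁱ) ≤ B(x)`. So all `yᵏ₁` lie in a ball around `z₁` of
radius `(B(x) - ∑ λᵢ B(yⁱ)) / (2δ|d|)`, and `C_δ = 1/δ` works.
-/

theorem Real.HolderConjugate.two_le_of_le_two {p q : ℝ} (h : p.HolderConjugate q) (hp : p ≤ 2) :
    2 ≤ q := by
  nlinarith [h.sub_one_mul_conj, h.sub_one_pos]

theorem Real.rpow_le_sq_iff {q s t : ℝ} (hs : 0 ≤ s) (ht : 0 ≤ t) :
    s ^ q ≤ t ^ 2 ↔ s ^ (q / 2) ≤ t := by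
  rw [← Real.sqrt_le_sqrt_iff (by positivity), Real.sqrt_sq ht, Real.sqrt_eq_rpow,
    ← Real.rpow_mul hs, mul_one_div]

theorem convex_omegaP {E : Type*} [NormedAddCommGroup E] [NormedSpace ℝ E] {p q : ℝ}
    (hp : 1 ≤ p) (hq : 2 ≤ q) :
    Convex ℝ (OmegaP (H := E) p q) := by
  rintro x ⟨hx₂, hx₃, hx₄, hx₁, hx₂₄⟩ y ⟨hy₂, hy₃, hy₄, hy₁, hy₂₄⟩ a b ha hb hab
  have hnorm : ‖a • x.1 + b • y.1‖ ≤ a * ‖x.1‖ + b * ‖y.1‖ := by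
    simpa [norm_smul, abs_of_nonneg ha, abs_of_nonneg hb] using norm_add_le (a • x.1) (b • y.1)
  have hrpow {r : ℝ} (hr : 1 ≤ r) {s t : ℝ} (hs : 0 ≤ s) (ht : 0 ≤ t) :
      (a * s + b * t) ^ r ≤ a * s ^ r + b * t ^ r := by
    simpa using (convexOn_rpow hr).2 (mem_Ici.2 hs) (mem_Ici.2 ht) ha hb hab
  rw [Real.rpow_le_sq_iff hx₂ hx₄] at hx₂₄
  rw [Real.rpow_le_sq_iff hy₂ hy₄] at hy₂₄
  simp only [OmegaP, mem_ofPred_eq, Prod.fst_add, Prod.snd_add, Prod.smul_fst, Prod.smul_snd,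
    smul_eq_mul]
  refine ⟨by positivity, by positivity, by positivity, ?_, ?_⟩
  · calc ‖a • x.1 + b • y.1‖ ^ p ≤ (a * ‖x.1‖ + b * ‖y.1‖) ^ p :=
          Real.rpow_le_rpow (norm_nonneg _) hnorm (by linarith)
      _ ≤ a * ‖x.1‖ ^ p + b * ‖y.1‖ ^ p := hrpow hp (norm_nonneg _) (norm_nonneg _)
      _ ≤ a * x.2.2.1 + b * y.2.2.1 := by gcongr
  · rw [Real.rpow_le_sq_iff (by positivity) (by positivity)]
    calc (a * x.2.1 + b * y.2.1) ^ (q / 2) ≤ a * x.2.1 ^ (q / 2) + b * y.2.1 ^ (q / 2) :=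
          hrpow (by linarith) hx₂ hy₂
      _ ≤ a * x.2.2.2 + b * y.2.2.2 := by gcongr

theorem nonneg_on_Icc_of_midpoint_concave {h : ℝ → ℝ} (hc : ContinuousOn h (Icc 0 1))
    (h0 : 0 ≤ h 0) (h1 : 0 ≤ h 1)
    (hmid : ∀ s ∈ Icc (0 : ℝ) 1, ∀ t ∈ Icc (0 : ℝ) 1, (h s + h t) / 2 ≤ h ((s + t) / 2)) :
    ∀ t ∈ Icc (0 : ℝ) 1, 0 ≤ h t := by
  obtain ⟨t₀, ht₀, hmin⟩ := isCompact_Icc.exists_isMinOn (nonempty_Icc.2 zero_le_one) hc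
  -- if `h` takes a negative value, its leftmost minimiser is interior and violates `hmid`
  set K := Icc (0 : ℝ) 1 ∩ h ⁻¹' Iic (h t₀)
  have hK : IsCompact K := isCompact_Icc.of_isClosed_subset
    (hc.preimage_isClosed_of_isClosed isClosed_Icc isClosed_Iic) inter_subset_left
  obtain ⟨⟨ht₁0, ht₁1⟩, ht₁min⟩ := hK.sInf_mem ⟨t₀, ht₀, le_refl (h t₀)⟩
  set t₁ := sInf K
  replace ht₁min : h t₁ ≤ h t₀ := ht₁min
  by_contra! ⟨t, ht, hneg⟩
  have hneg₁ : h t₁ < 0 := ht₁min.trans_lt ((hmin ht).trans_lt hneg)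
  have hpos : 0 < t₁ := ht₁0.lt_of_ne (fun e => by rw [← e] at hneg₁; linarith)
  have hlt : t₁ < 1 := ht₁1.lt_of_ne (fun e => by rw [e] at hneg₁; linarith)
  set ε := min t₁ (1 - t₁)
  have hε : 0 < ε := lt_min hpos (by linarith)
  have hl : t₁ - ε ∈ Icc (0 : ℝ) 1 := ⟨by linarith [min_le_left t₁ (1 - t₁)], by linarith⟩
  have hr : t₁ + ε ∈ Icc (0 : ℝ) 1 := ⟨by linarith, by linarith [min_le_right t₁ (1 - t₁)]⟩
  have hleft : h t₀ < h (t₁ - ε) := by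
    by_contra! hle
    linarith [csInf_le hK.bddBelow ⟨hl, hle⟩]
  have hmid₁ := hmid _ hl _ hr
  rw [show (t₁ - ε + (t₁ + ε)) / 2 = t₁ by ring] at hmid₁
  have hright : h t₀ ≤ h (t₁ + ε) := hmin hr
  linarith

theorem ContinuousOn.concaveOn_of_midpoint {E : Type*} [AddCommGroup E] [Module ℝ E]
    [TopologicalSpace E] [IsTopologicalAddGroup E] [ContinuousSMul ℝ E] {s : Set E} {f : E → ℝ}
    (hf : ContinuousOn f s) (hs : Convex ℝ s)
    (hmid : ∀ u ∈ s, ∀ v ∈ s, (f u + f v) / 2 ≤ f (midpoint ℝ u v)) :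
    ConcaveOn ℝ s f := by
  refine ⟨hs, fun u hu v hv a b ha hb hab => ?_⟩
  set g : ℝ → E := fun t => (1 - t) • u + t • v
  have hg : MapsTo g (Icc 0 1) s := fun t ht => hs hu hv (by linarith [ht.2]) ht.1 (by ring)
  have hgmid : ∀ s t : ℝ, g ((s + t) / 2) = midpoint ℝ (g s) (g t) := by
    intro s t
    simp only [g, midpoint_eq_smul_add, invOf_eq_inv]
    module
  have key := nonneg_on_Icc_of_midpoint_concave
    (h := fun t => f (g t) - ((1 - t) * f u + t * f v))
    ((hf.comp (by fun_prop) hg).sub (by fun_prop)) (by simp [g]) (by simp [g])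
    (fun s hs t ht => by
      have := hmid _ (hg hs) _ (hg ht)
      rw [← hgmid] at this
      linarith)
    b ⟨hb, by linarith⟩
  simp only [g, show 1 - b = a by linarith, smul_eq_mul] at key ⊢
  linarith

theorem mul_diam_range_le {ι X : Type*} [PseudoMetricSpace X] {f : ι → X} {z : X} {c R : ℝ}
    (hc : 0 ≤ c) (hR : 0 ≤ R) (h : ∀ i, c * dist (f i) z ≤ R) :
    c * Metric.diam (range f) ≤ 2 * R := by
  rcases hc.eq_or_lt with rfl | hc
  · simpa using hR
  have hdiam : Metric.diam (range f) ≤ 2 * (R / c) :=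
    Metric.diam_le_of_subset_closedBall (by positivity)
      (range_subset_iff.2 fun i => Metric.mem_closedBall.2 ((le_div_iff₀' hc).2 (h i)))
  calc c * Metric.diam (range f) ≤ c * (2 * (R / c)) := by gcongr
    _ = 2 * R := by field_simp

section ConcaveOn

variable {ι E F : Type*} [AddCommGroup E] [Module ℝ E] [SeminormedAddCommGroup F]
  [NormedSpace ℝ F] {Ω : Set E} {B : E → ℝ} {z : E} {c M : ℝ}

theorem ConcaveOn.two_mul_dist_add_le (hB : ConcaveOn ℝ Ω B) (π : E →ₗ[ℝ] F)
    (hpair : ∀ u ∈ Ω, ∀ w ∈ Ω, midpoint ℝ u w = z → c * dist (π u) (π w) + (B u + B w) / 2 ≤ M)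
    {a b : E} (ha : a ∈ Ω) (hb : b ∈ Ω) {s : ℝ} (hs₀ : 0 ≤ s) (hs : s ≤ 1 / 2)
    (hz : s • a + (1 - s) • b = z) :
    2 * s * c * dist (π a) (π b) + (s * B a + (1 - s) * B b) ≤ M := by
  set u := (2 * s) • a + (1 - 2 * s) • b
  have hu : u ∈ Ω := hB.1 ha hb (by linarith) (by linarith) (by ring)
  have hmid : midpoint ℝ u b = z := by
    rw [← hz, midpoint_eq_smul_add, invOf_eq_inv]
    module
  have hdist : dist (π u) (π b) = 2 * s * dist (π a) (π b) := by
    rw [dist_eq_norm, dist_eq_norm, ← map_sub, ← map_sub,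
      show u - b = (2 * s) • (a - b) by module, map_smul, norm_smul,
      Real.norm_of_nonneg (by positivity)]
  have hBu : 2 * s * B a + (1 - 2 * s) * B b ≤ B u :=
    hB.2 ha hb (by linarith) (by linarith) (by ring)
  have hpair_ub := hpair u hu b hb hmid
  rw [hdist] at hpair_ub
  linarith

theorem ConcaveOn.two_mul_dist_add_sum_le [Fintype ι] (hB : ConcaveOn ℝ Ω B) (π : E →ₗ[ℝ] F)
    {y : ι → E} {lam : ι → ℝ}
    (hpair : ∀ u ∈ Ω, ∀ w ∈ Ω, midpoint ℝ u w = ∑ i, lam i • y i →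
      c * dist (π u) (π w) + (B u + B w) / 2 ≤ M)
    (hy : ∀ i, y i ∈ Ω) {δ : ℝ} (hδ₀ : 0 ≤ δ) (hδ : δ ≤ 1 / 2) (hlam : ∀ i, δ ≤ lam i)
    (hsum : ∑ i, lam i = 1) (hc : 0 ≤ c) (k : ι) :
    2 * δ * c * dist (π (y k)) (π (∑ i, lam i • y i)) + ∑ i, lam i * B (y i) ≤ M := by
  classical
  set s := min (lam k) (1 / 2)
  have hδs : δ ≤ s := le_min (hlam k) hδ
  have hs : s ≤ 1 / 2 := min_le_right _ _
  set μ : ι → ℝ := fun i => lam i - if i = k then s else 0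
  have hμ : ∀ i, 0 ≤ μ i := by
    intro i
    by_cases hi : i = k
    · simp [μ, hi, s]
    · simpa [μ, hi] using hδ₀.trans (hlam i)
  have hμsum : ∑ i, μ i = 1 - s := by simp [μ, Finset.sum_sub_distrib, hsum]
  set b := Finset.univ.centerMass μ y
  have hb : b ∈ Ω :=
    hB.1.centerMass_mem (fun i _ => hμ i) (by rw [hμsum]; linarith) (fun i _ => hy i)
  have hsplit : s • y k + (1 - s) • b = ∑ i, lam i • y i := by
    simp only [b, Finset.centerMass, hμsum, smul_smul, mul_inv_cancel₀ (by linarith : 1 - s ≠ 0),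
      one_smul, μ, sub_smul, ite_smul, zero_smul, Finset.sum_sub_distrib, Finset.sum_ite_eq',
      Finset.mem_univ, if_true]
    abel
  have hBb : ∑ i, lam i * B (y i) - s * B (y k) ≤ (1 - s) * B b := by
    have hJensen : Finset.univ.centerMass μ (B ∘ y) ≤ B b :=
      hB.le_map_centerMass (fun i _ => hμ i) (by rw [hμsum]; linarith) (fun i _ => hy i)
    have hcm : Finset.univ.centerMass μ (B ∘ y) =
        (1 - s)⁻¹ * (∑ i, lam i * B (y i) - s * B (y k)) := by
      simp [Finset.centerMass, hμsum, μ, sub_mul, ite_mul, Finset.sum_sub_distrib]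
    rwa [hcm, inv_mul_le_iff₀ (by linarith)] at hJensen
  have hdist : dist (π (y k)) (π (∑ i, lam i • y i)) = (1 - s) * dist (π (y k)) (π b) := by
    rw [← hsplit, dist_eq_norm, dist_eq_norm, ← map_sub, ← map_sub,
      show y k - (s • y k + (1 - s) • b) = (1 - s) • (y k - b) by module, map_smul, norm_smul,
      Real.norm_of_nonneg (by linarith)]
  have hweights : δ * (1 - s) ≤ s := by nlinarith
  have hpair_b := hB.two_mul_dist_add_le π hpair (hy k) hb (hδ₀.trans hδs) hs hsplit
  calc 2 * δ * c * dist (π (y k)) (π (∑ i, lam i • y i)) + ∑ i, lam i * B (y i)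
      = 2 * c * dist (π (y k)) (π b) * (δ * (1 - s)) + ∑ i, lam i * B (y i) := by
        rw [hdist]; ring
    _ ≤ 2 * c * dist (π (y k)) (π b) * s + (s * B (y k) + (1 - s) * B b) := by
        gcongr
        linarith
    _ ≤ M := by linarith

theorem ConcaveOn.mul_diam_add_sum_le [Fintype ι] (hB : ConcaveOn ℝ Ω B) (π : E →ₗ[ℝ] F)
    {y : ι → E} {lam : ι → ℝ}
    (hpair : ∀ u ∈ Ω, ∀ w ∈ Ω, midpoint ℝ u w = ∑ i, lam i • y i →
      c * dist (π u) (π w) + (B u + B w) / 2 ≤ M)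
    (hy : ∀ i, y i ∈ Ω) {δ : ℝ} (hδ₀ : 0 < δ) (hδ : δ ≤ 1 / 2) (hlam : ∀ i, δ ≤ lam i)
    (hsum : ∑ i, lam i = 1) (hc : 0 ≤ c) :
    c * Metric.diam (range fun i => π (y i)) + δ⁻¹ * ∑ i, lam i * B (y i) ≤ δ⁻¹ * M := by
  set S := ∑ i, lam i * B (y i)
  have hk := hB.two_mul_dist_add_sum_le π hpair hy hδ₀.le hδ hlam hsum hc
  obtain ⟨k⟩ : Nonempty ι := by
    by_contra hι
    simp [not_nonempty_iff.1 hι] at hsum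
  have hR : 0 ≤ (M - S) / (2 * δ) := by
    have : 0 ≤ 2 * δ * c * dist (π (y k)) (π (∑ i, lam i • y i)) := by positivity
    exact div_nonneg (by linarith [hk k]) (by positivity)
  have hdiam := mul_diam_range_le hc hR fun i =>
    (le_div_iff₀' (by positivity)).2 (by rw [← mul_assoc]; linarith [hk i])
  have hR_eq : 2 * ((M - S) / (2 * δ)) = δ⁻¹ * M - δ⁻¹ * S := by field_simp
  linarith

end ConcaveOn

section CondB2

variable {E : Type*} [NormedAddCommGroup E] [InnerProductSpace ℝ E] {p q δ : ℝ}
  {B : E × ℝ × ℝ × ℝ → ℝ}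

theorem CondB2.midpoint_le (hB : CondB2 p q δ B) (hδ : δ ≤ 1 / 2)
    {x u w : E × ℝ × ℝ × ℝ} {d : ℝ} (hx : x ∈ OmegaP p q) (hu : u ∈ OmegaP p q)
    (hw : w ∈ OmegaP p q) (hd : midpoint ℝ u w - x = (0, d ^ 2, 0, 0)) :
    |d| * dist u.1 w.1 + (B u + B w) / 2 ≤ B x := by
  have h := hB 2 x ![u, w] d ![1 / 2, 1 / 2] hx (by simp [Fin.forall_fin_two, hu, hw])
    (by simpa [Fin.forall_fin_two] using hδ) (by norm_num)
    (by simpa [midpoint_eq_smul_add, smul_add] using hd)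
  have hrange : (range fun k => (![u, w] k).1) = {u.1, w.1} := by
    ext
    simp [Fin.exists_fin_two, eq_comm]
  rw [hrange, Metric.diam_pair, Fin.sum_univ_two] at h
  simp only [Matrix.cons_val_zero, Matrix.cons_val_one] at h
  linarith

theorem CondB2.concaveOn (hB : CondB2 p q δ B) (hδ : δ ≤ 1 / 2)
    (hΩ : Convex ℝ (OmegaP (H := E) p q)) (hc : ContinuousOn B (OmegaP p q)) :
    ConcaveOn ℝ (OmegaP p q) B :=
  hc.concaveOn_of_midpoint hΩ fun u hu w hw => by
    simpa using hB.midpoint_le hδ (hΩ.midpoint_mem hu hw) hu hw (d := 0) (by simp [Prod.ext_iff])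

end CondB2

/-- If `B ∈ K^p_{1/2}(H)`, then for every `δ ∈ (0, 1/2]` there is a constant `C_δ > 0`
such that `C_δ · B ∈ K^p_δ(H)`. -/
theorem lemma_any_delta (p q : ℝ) (hp : 1 < p) (hp2 : p ≤ 2) (hpq : 1 / p + 1 / q = 1)
    (B : H × ℝ × ℝ × ℝ → ℝ) (hB : MemK p q (1 / 2) B) :
    ∀ δ : ℝ, 0 < δ → δ ≤ 1 / 2 →
      ∃ C : ℝ, 0 < C ∧ MemK p q δ (fun x => C * B x) := by
  intro δ hδ hδ2
  obtain ⟨hcont, hB1, hB2⟩ := hB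
  have hq : 2 ≤ q := Real.HolderConjugate.two_le_of_le_two
    (Real.holderConjugate_iff.2 ⟨hp, by simpa [one_div] using hpq⟩) hp2
  have hconc := hB2.concaveOn le_rfl (convex_omegaP hp.le hq) hcont
  refine ⟨δ⁻¹, inv_pos.2 hδ, continuousOn_const.mul hcont,
    fun x hx hx₁ => mul_nonneg (inv_nonneg.2 hδ.le) (hB1 x hx hx₁), ?_⟩
  intro N x y d lam hx hy hlam hsum hd
  have hdiam := hconc.mul_diam_add_sum_le (LinearMap.fst ℝ H (ℝ × ℝ × ℝ))
    (fun u hu w hw hmid => hB2.midpoint_le le_rfl hx hu hw (hmid ▸ hd)) hy hδ hδ2 hlam hsum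
    (abs_nonneg d)
  simpa [Finset.mul_sum, mul_left_comm] using hdiam
end
end

section
/- For every δ ∈ (0, 1/2] there exists a constant c_δ > 0 with the following property. Let H be a real Hilbert space, N ∈ ℕ, x¹, …, x^N ∈ H, and let a₁, …, a_N be positive integers with b := a₁ + ⋯ + a_N even and a_k ≥ δ·b for every k. Then there exists an enumeration z₁, …, z_b of the multiset consisting of a_k copies of x^k for each k, such that |(z₁ + ⋯ + z_{b/2})/(b/2) − (z_{b/2+1} + ⋯ + z_b)/(b/2)| ≥ c_δ · diam{x¹, …, x^N}, where |·| is the H-norm and diam denotes the diameter. -/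
/-!
Take a diametral pair `x p, x q`, put `u = x p - x q`, and list the multiset in increasing order
of `⟪·, u⟫`. The two halves then lie on either side of a median value `θ` and have the same size,
so the difference of their sums, tested against `u`, is `∑ₖ aₖ |⟪x k, u⟫ - θ|`. Keeping only the
terms `k = p, q` bounds this below by `δ b (⟪x p, u⟫ - ⟪x q, u⟫) = δ b ‖u‖²`, hence the averages of
the halves are at least `2δ ‖u‖ = 2δ · diam` apart.
-/

open Finset

universe u

lemma Multiset.exists_fin_enum_monotone {α β : Type*} [LinearOrder β] {n : ℕ} (M : Multiset α)
    (hM : Multiset.card M = n) (f : α → β) :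
    ∃ z : Fin n → α, univ.val.map z = M ∧ Monotone (f ∘ z) := by
  obtain ⟨l, rfl⟩ : ∃ l : List α, (l : Multiset α) = M := ⟨M.toList, M.coe_toList⟩
  rw [Multiset.coe_card] at hM
  subst hM
  refine ⟨l.get ∘ Tuple.sort (f ∘ l.get), ?_, Tuple.monotone_sort (f ∘ l.get)⟩
  rw [← Multiset.map_map, Multiset.map_univ_val_equiv, Fin.univ_val_map, List.ofFn_get]

lemma exists_dist_eq_diam_range {ι X : Type*} [Finite ι] [Nonempty ι] [PseudoMetricSpace X]
    (x : ι → X) : ∃ p q, Metric.diam (Set.range x) = dist (x p) (x q) := by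
  obtain ⟨⟨p, q⟩, hpq⟩ := Finite.exists_max fun pq : ι × ι => dist (x pq.1) (x pq.2)
  refine ⟨p, q, le_antisymm ?_ ?_⟩
  · refine Metric.diam_le_of_forall_dist_le dist_nonneg ?_
    rintro _ ⟨i, rfl⟩ _ ⟨j, rfl⟩
    exact hpq (i, j)
  · exact Metric.dist_le_diam_of_mem (Set.finite_range x).isBounded ⟨p, rfl⟩ ⟨q, rfl⟩

lemma Fintype.sum_comp_eq_sum_nsmul_of_map_eq {ι κ α M : Type*} [Fintype ι] [Fintype κ]
    [AddCommMonoid M] {z : ι → α} {a : κ → ℕ} {x : κ → α}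
    (hz : univ.val.map z = ∑ k, Multiset.replicate (a k) (x k)) (φ : α → M) :
    ∑ i, φ (z i) = ∑ k, a k • φ (x k) := by
  simpa [map_sum, Multiset.map_map, Multiset.map_replicate] using
    congrArg (Multiset.sumAddMonoidHom.comp (Multiset.mapAddMonoidHom φ)) hz

lemma card_filter_val_lt_half_eq {b : ℕ} (hb : 2 ∣ b) :
    #{i : Fin b | (i : ℕ) < b / 2} = #{i : Fin b | ¬ (i : ℕ) < b / 2} := by
  have := card_filter_add_card_filter_not (s := (univ : Finset (Fin b))) (fun i => (i : ℕ) < b / 2)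
  rw [card_univ, Fintype.card_fin, Fin.card_filter_val_lt] at *
  omega

section OrderedGroup

variable {α : Type*} [AddCommGroup α] [LinearOrder α] [IsOrderedAddMonoid α]

lemma sum_filter_not_sub_sum_filter_eq_sum_abs_sub {ι : Type*} [Fintype ι]
    (p : ι → Prop) [DecidablePred p] (g : ι → α) (θ : α)
    (hcard : #{i | p i} = #{i | ¬ p i}) (hlow : ∀ i, p i → g i ≤ θ)
    (hhigh : ∀ i, ¬ p i → θ ≤ g i) :
    ∑ i with ¬ p i, g i - ∑ i with p i, g i = ∑ i, |g i - θ| := by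
  rw [← sum_filter_add_sum_filter_not univ p, sum_congr rfl fun i hi =>
      abs_of_nonpos (sub_nonpos.2 (hlow i (mem_filter.1 hi).2)),
    sum_congr rfl fun i hi => abs_of_nonneg (sub_nonneg.2 (hhigh i (mem_filter.1 hi).2)),
    sum_neg_distrib, sum_sub_distrib, sum_sub_distrib, sum_const, sum_const, hcard]
  abel

lemma Monotone.exists_sum_upper_half_sub_sum_lower_half_eq_sum_abs_sub {b : ℕ} {g : Fin b → α}
    (hg : Monotone g) (hb : 2 ∣ b) (hb0 : 0 < b) :
    ∃ θ, ∑ i ∈ univ.filter (fun i : Fin b => ¬ (i : ℕ) < b / 2), g i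
      - ∑ i ∈ univ.filter (fun i : Fin b => (i : ℕ) < b / 2), g i = ∑ i, |g i - θ| := by
  let m : Fin b := ⟨b / 2, by omega⟩
  refine ⟨g m, sum_filter_not_sub_sum_filter_eq_sum_abs_sub _ g _ (card_filter_val_lt_half_eq hb)
    (fun i hi => hg (Fin.le_def.2 hi.le)) (fun i hi => hg (Fin.le_def.2 (Nat.le_of_not_lt hi)))⟩

end OrderedGroup

lemma mul_sub_le_sum_mul_abs_sub {ι : Type*} [Fintype ι] [DecidableEq ι] {w : ι → ℝ} {W : ℝ}
    (hW : 0 ≤ W) (hw : ∀ k, W ≤ w k) (g : ι → ℝ) (θ : ℝ) (p q : ι) :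
    W * (g p - g q) ≤ ∑ k, w k * |g k - θ| := by
  have hnonneg : ∀ k ∈ univ, 0 ≤ w k * |g k - θ| :=
    fun k _ => mul_nonneg (hW.trans (hw k)) (abs_nonneg _)
  obtain rfl | hpq := eq_or_ne p q
  · simpa using sum_nonneg hnonneg
  calc W * (g p - g q) ≤ W * |g p - θ| + W * |g q - θ| := by
        rw [← mul_add]
        exact mul_le_mul_of_nonneg_left
          (by linarith [le_abs_self (g p - θ), neg_abs_le (g q - θ)]) hW
    _ ≤ w p * |g p - θ| + w q * |g q - θ| := by gcongr <;> apply hw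
    _ = ∑ k ∈ {p, q}, w k * |g k - θ| := (sum_pair (f := fun k => w k * |g k - θ|) hpq).symm
    _ ≤ ∑ k, w k * |g k - θ| :=
        sum_le_sum_of_subset_of_nonneg (subset_univ _) fun k hk _ => hnonneg k hk

section InnerProductSpace

variable {H : Type*} [NormedAddCommGroup H] [InnerProductSpace ℝ H]

lemma mul_norm_le_norm_of_mul_norm_sq_le_inner {u v : H} {c : ℝ}
    (h : c * ‖u‖ ^ 2 ≤ inner ℝ v u) : c * ‖u‖ ≤ ‖v‖ := by
  obtain hu | hu := (norm_nonneg u).eq_or_lt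
  · simp [← hu]
  refine le_of_mul_le_mul_right ?_ hu
  calc c * ‖u‖ * ‖u‖ = c * ‖u‖ ^ 2 := by ring
    _ ≤ ‖v‖ * ‖u‖ := h.trans (real_inner_le_norm v u)

lemma mul_norm_sub_sq_le_inner_sum_upper_half_sub_sum_lower_half {N b : ℕ} {W : ℝ}
    {x : Fin N → H} {a : Fin N → ℕ} (hW : 0 ≤ W) (ha : ∀ k, W ≤ a k) (hb : 2 ∣ b) (hb0 : 0 < b)
    (p q : Fin N) {z : Fin b → H} (hz : univ.val.map z = ∑ k, Multiset.replicate (a k) (x k))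
    (hmono : Monotone fun i => inner ℝ (z i) (x p - x q)) :
    W * ‖x p - x q‖ ^ 2 ≤ inner ℝ (∑ i ∈ univ.filter (fun i : Fin b => ¬ (i : ℕ) < b / 2), z i
      - ∑ i ∈ univ.filter (fun i : Fin b => (i : ℕ) < b / 2), z i) (x p - x q) := by
  set u := x p - x q
  obtain ⟨θ, hθ⟩ := hmono.exists_sum_upper_half_sub_sum_lower_half_eq_sum_abs_sub hb hb0
  rw [inner_sub_left, sum_inner, sum_inner, hθ,
    Fintype.sum_comp_eq_sum_nsmul_of_map_eq hz fun v => |inner ℝ v u - θ|]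
  simpa [← inner_sub_left, real_inner_self_eq_norm_sq, u] using
    mul_sub_le_sum_mul_abs_sub hW ha (fun k => inner ℝ (x k) u) θ p q

end InnerProductSpace

theorem halves_far_apart_general (δ : ℝ) (hδ : 0 < δ) :
    ∃ c : ℝ, 0 < c ∧
      ∀ (H : Type u) [NormedAddCommGroup H] [InnerProductSpace ℝ H]
        (N : ℕ) (x : Fin N → H) (a : Fin N → ℕ),
        (∀ k, 0 < a k) →
        (∀ k, δ * (∑ k, a k : ℕ) ≤ (a k : ℝ)) →
        2 ∣ (∑ k, a k) →
        ∃ z : Fin (∑ k, a k) → H,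
          (Multiset.map z (Finset.univ.val) =
            ∑ k, Multiset.replicate (a k) (x k)) ∧
          c * Metric.diam (Set.range x) ≤
            ‖(((∑ k, a k : ℕ) / 2 : ℕ) : ℝ)⁻¹ •
                ((∑ i ∈ Finset.univ.filter (fun i : Fin (∑ k, a k) => (i : ℕ) < (∑ k, a k) / 2), z i)
                  - ∑ i ∈ Finset.univ.filter (fun i : Fin (∑ k, a k) => ¬ (i : ℕ) < (∑ k, a k) / 2), z i)‖ := by
  refine ⟨2 * δ, by positivity, fun H _ _ N x a hpos hδa hb => ?_⟩
  set b := ∑ k, a k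
  have hcard : Multiset.card (∑ k, Multiset.replicate (a k) (x k)) = b := by
    simp [Multiset.card_sum, b]
  cases isEmpty_or_nonempty (Fin N) with
  | inl _ =>
    obtain ⟨z, hz, -⟩ := Multiset.exists_fin_enum_monotone _ hcard fun _ => (0 : ℝ)
    exact ⟨z, hz, by simp [Set.range_eq_empty]⟩
  | inr _ =>
    obtain ⟨p, q, hdiam⟩ := exists_dist_eq_diam_range x
    obtain ⟨z, hz, hmono⟩ :=
      Multiset.exists_fin_enum_monotone _ hcard fun v => inner ℝ v (x p - x q)
    refine ⟨z, hz, ?_⟩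
    have hb0 : 0 < b := (hpos p).trans_le (single_le_sum (fun k _ => (hpos k).le) (mem_univ p))
    have key := mul_norm_le_norm_of_mul_norm_sq_le_inner <|
      mul_norm_sub_sq_le_inner_sum_upper_half_sub_sum_lower_half (by positivity) hδa hb hb0 p q hz
        hmono
    have hh : (0 : ℝ) < (b / 2 : ℕ) := by exact_mod_cast Nat.div_pos (Nat.le_of_dvd hb0 hb) two_pos
    have hb2 : ((b / 2 : ℕ) : ℝ) * 2 = b := by exact_mod_cast Nat.div_mul_cancel hb
    rw [hdiam, dist_eq_norm, norm_smul, norm_sub_rev _ (∑ i ∈ _, z i), norm_inv,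
      Real.norm_of_nonneg hh.le, le_inv_mul_iff₀ hh]
    calc ((b / 2 : ℕ) : ℝ) * (2 * δ * ‖x p - x q‖) = δ * b * ‖x p - x q‖ := by
          rw [← hb2]; ring
      _ ≤ _ := key

/-- For every `δ ∈ (0, 1/2]` there is a constant `c_δ > 0` such that: given points
`x¹, …, x^N` in a real Hilbert space with positive integer multiplicities `a₁, …, a_N`
whose total `b = a₁ + ⋯ + a_N` is even and with `a_k ≥ δ·b` for each `k`, the multiset
consisting of `a_k` copies of each `x^k` admits an enumeration `z₁, …, z_b` such that the
averages of the two halves differ in norm by at least `c_δ` times the diameter of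
`{x¹, …, x^N}`. -/
theorem halves_far_apart (δ : ℝ) (hδ : 0 < δ) (hδ2 : δ ≤ 1 / 2) :
    ∃ c : ℝ, 0 < c ∧
      ∀ (H : Type u) [NormedAddCommGroup H] [InnerProductSpace ℝ H]
        (N : ℕ) (x : Fin N → H) (a : Fin N → ℕ),
        (∀ k, 0 < a k) →
        (∀ k, δ * (∑ k, a k : ℕ) ≤ (a k : ℝ)) →
        2 ∣ (∑ k, a k) →
        ∃ z : Fin (∑ k, a k) → H,
          (Multiset.map z (Finset.univ.val) =
            ∑ k, Multiset.replicate (a k) (x k)) ∧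
          c * Metric.diam (Set.range x) ≤
            ‖(((∑ k, a k : ℕ) / 2 : ℕ) : ℝ)⁻¹ •
                ((∑ i ∈ Finset.univ.filter (fun i : Fin (∑ k, a k) => (i : ℕ) < (∑ k, a k) / 2), z i)
                  - ∑ i ∈ Finset.univ.filter (fun i : Fin (∑ k, a k) => ¬ (i : ℕ) < (∑ k, a k) / 2), z i)‖ :=
  halves_far_apart_general δ hδ
end
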